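/- For the matrix FV⁻¹ of the single-group model above, the characteristic structure implies ρ(FV⁻¹) < 1 if and only if the expected-secondary-infections expression R = βφ[(1−τ)(ω^Pω^A/ρ^A + ω^A/γ^A) + τ(ω^Pω^Y/ρ^Y + ω^Y/((1−Π)γ^Y + Πη))] satisfies R < 1. -/

import Mathlib

open Polynomial Matrix

/-- The spectral radius of a real square matrix: the supremum of the absolute
values of its complex eigenvalues (roots of its characteristic polynomial over ℂ). -/
noncomputable def specRad {n : ℕ} (A : Matrix (Fin n) (Fin n) ℝ) : ℝ :=
  sSup {x : ℝ | ∃ μ : ℂ,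
    (Matrix.charpoly (A.map (Complex.ofReal : ℝ → ℂ))).IsRoot μ ∧ x = ‖μ‖}

private lemma charpoly_eval' {n : ℕ} (M : Matrix (Fin n) (Fin n) ℂ) (μ : ℂ) :
    M.charpoly.eval μ = (μ • (1 : Matrix (Fin n) (Fin n) ℂ) - M).det := by
  rw [Matrix.charpoly, ← Polynomial.coe_evalRingHom, RingHom.map_det]
  congr 1
  ext i j
  by_cases h : i = j <;>
    simp [h, Matrix.charmatrix_apply, Matrix.one_apply, Matrix.smul_apply, Matrix.sub_apply]

private lemma det5' (a b c e t μ : ℂ) :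
    (μ • (1 : Matrix (Fin 5) (Fin 5) ℂ) -
      !![0, a, c, b, e;
         1 - t, 0, 0, 0, 0;
         t, 0, 0, 0, 0;
         0, 1, 0, 0, 0;
         0, 0, 1, 0, 0]).det
    = μ ^ 2 * (μ ^ 3 - (a * (1 - t) + c * t) * μ - (b * (1 - t) + e * t)) := by
  have h : μ • (1 : Matrix (Fin 5) (Fin 5) ℂ) -
      !![0, a, c, b, e;
         1 - t, 0, 0, 0, 0;
         t, 0, 0, 0, 0;
         0, 1, 0, 0, 0;
         0, 0, 1, 0, 0] =
      !![μ, -a, -c, -b, -e;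
         -(1 - t), μ, 0, 0, 0;
         -t, 0, μ, 0, 0;
         0, -1, 0, μ, 0;
         0, 0, -1, 0, μ] := by
    ext i j
    fin_cases i <;> fin_cases j <;> simp [Matrix.one_apply, Matrix.vecHead, Matrix.vecTail]
  rw [h]
  simp [Matrix.det_succ_row_zero, Fin.sum_univ_succ, Fin.succAbove]
  ring

private lemma key' (A B : ℝ) (hA : 0 < A) (hB : 0 < B) :
    sSup {x : ℝ | ∃ μ : ℂ, μ ^ 2 * (μ ^ 3 - (A : ℂ) * μ - (B : ℂ)) = 0 ∧ x = ‖μ‖} < 1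
      ↔ A + B < 1 := by
  set S := {x : ℝ | ∃ μ : ℂ, μ ^ 2 * (μ ^ 3 - (A : ℂ) * μ - (B : ℂ)) = 0 ∧ x = ‖μ‖}
  have hq : (X ^ 3 - C (A : ℂ) * X - C (B : ℂ)) ≠ 0 := by
    intro h
    have := congrArg (fun p => Polynomial.coeff p 3) h
    simp [coeff_X_pow] at this
  have hQfin : {μ : ℂ | μ ^ 3 - (A : ℂ) * μ - (B : ℂ) = 0}.Finite := by
    have := Polynomial.finite_setOf_isRoot hq
    convert this using 1
    ext μ
    simp [Polynomial.IsRoot]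
  have hSfin : S.Finite := by
    have : S ⊆ (norm : ℂ → ℝ) '' ({0} ∪ {μ : ℂ | μ ^ 3 - (A : ℂ) * μ - (B : ℂ) = 0}) := by
      rintro x ⟨μ, hμ, rfl⟩
      rcases mul_eq_zero.1 hμ with h | h
      · exact ⟨μ, Or.inl (by simpa using pow_eq_zero_iff (n := 2) (by norm_num) |>.1 h), rfl⟩
      · exact ⟨μ, Or.inr h, rfl⟩
    exact Set.Finite.subset (((Set.finite_singleton 0).union hQfin).image _) this
  have hSne : S.Nonempty := ⟨0, 0, by simp, by simp⟩
  constructor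
  · intro hlt
    by_contra hAB
    push_neg at hAB
    set T : ℝ := A + B + 1 with hT
    have hT1 : (1 : ℝ) ≤ T := by linarith
    have hf1 : (1 : ℝ) ^ 3 - A * 1 - B ≤ 0 := by linarith
    have hfT : 0 ≤ T ^ 3 - A * T - B := by
      have h1 : T ^ 2 ≥ T := by nlinarith
      have : T ^ 3 ≥ T * T := by nlinarith
      nlinarith
    have hcont : ContinuousOn (fun t : ℝ => t ^ 3 - A * t - B) (Set.Icc 1 T) := by
      fun_prop
    obtain ⟨r, hrIcc, hr⟩ := intermediate_value_Icc hT1 hcont ⟨hf1, hfT⟩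
    have hr0 : r ^ 3 - A * r - B = 0 := hr
    have hr1 : 1 ≤ r := hrIcc.1
    have hrS : r ∈ S := by
      refine ⟨(r : ℂ), ?_, ?_⟩
      · have : ((r : ℂ)) ^ 3 - (A : ℂ) * r - (B : ℂ) = ((r ^ 3 - A * r - B : ℝ) : ℂ) := by
          push_cast; ring
        rw [this, hr0]
        simp
      · rw [Complex.norm_of_nonneg (by linarith)]
    have := le_csSup hSfin.bddAbove hrS
    linarith
  · intro hAB
    obtain ⟨μ, hμ, hsup⟩ := hSne.csSup_mem hSfin
    rw [hsup]
    by_contra hge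
    push_neg at hge
    set t : ℝ := ‖μ‖ with ht
    have ht1 : 1 ≤ t := hge
    have ht3 : t ^ 3 = ‖μ ^ 3‖ := by simp [map_pow, ht]
    rcases mul_eq_zero.1 hμ with h | h
    · have : μ = 0 := pow_eq_zero_iff (n := 2) (by norm_num) |>.1 h
      rw [this] at ht; simp [ht] at ht1; linarith
    · have hcube : μ ^ 3 = (A : ℂ) * μ + (B : ℂ) := by linear_combination h
      have hle : t ^ 3 ≤ A * t + B := by
        rw [ht3, hcube]
        calc ‖(A : ℂ) * μ + (B : ℂ)‖
            ≤ ‖(A : ℂ) * μ‖ + ‖(B : ℂ)‖ := norm_add_le _ _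
          _ = A * t + B := by
              rw [norm_mul, Complex.norm_of_nonneg hA.le,
                Complex.norm_of_nonneg hB.le]
      have htpos : 0 < t ^ 3 := by positivity
      have hsq : 1 ≤ t ^ 2 := by nlinarith
      have h1 : t ≤ t ^ 3 := by nlinarith [mul_le_mul_of_nonneg_left hsq (le_trans zero_le_one ht1)]
      have h2 : (1 : ℝ) ≤ t ^ 3 := le_trans ht1 h1
      nlinarith

set_option maxHeartbeats 2000000 in
/-- For the single-group SEIR next-generation matrix `F V⁻¹`, the spectral
radius is below `1` if and only if the expected-secondary-infections
expression `R` is below `1`. -/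
theorem single_group_R0_threshold
    (β φ ωP ωA ωY τ σ ρA ρY γA γY η Pi_ : ℝ)
    (hβ : 0 < β) (hφ : 0 < φ) (hωP : 0 < ωP) (hωA : 0 < ωA) (hωY : 0 < ωY)
    (hσ : 0 < σ) (hρA : 0 < ρA) (hρY : 0 < ρY) (hγA : 0 < γA) (hγY : 0 < γY)
    (hη : 0 < η) (hτ : τ ∈ Set.Ioo (0 : ℝ) 1) (hPi : Pi_ ∈ Set.Ioo (0 : ℝ) 1) :
    specRad
      (!![0, β * ωP * ωA * φ, β * ωP * ωY * φ, β * ωA * φ, β * ωY * φ;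
          (1 - τ) * σ, 0, 0, 0, 0;
          τ * σ, 0, 0, 0, 0;
          0, ρA, 0, 0, 0;
          0, 0, ρY, 0, 0] *
        (Matrix.diagonal ![σ, ρA, ρY, γA, (1 - Pi_) * γY + Pi_ * η])⁻¹) < 1
    ↔ β * φ * ((1 - τ) * (ωP * ωA / ρA + ωA / γA)
        + τ * (ωP * ωY / ρY + ωY / ((1 - Pi_) * γY + Pi_ * η))) < 1 := by
  obtain ⟨hτ0, hτ1⟩ := hτ
  obtain ⟨hPi0, hPi1⟩ := hPi
  have hd : 0 < (1 - Pi_) * γY + Pi_ * η := by nlinarith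
  have h1τ : 0 < 1 - τ := by linarith
  have ha : 0 < β * ωP * ωA * φ / ρA := by positivity
  have hb : 0 < β * ωA * φ / γA := by positivity
  have hc : 0 < β * ωP * ωY * φ / ρY := by positivity
  have he : 0 < β * ωY * φ / ((1 - Pi_) * γY + Pi_ * η) := by positivity
  have hA : 0 < β * ωP * ωA * φ / ρA * (1 - τ) + β * ωP * ωY * φ / ρY * τ :=
    add_pos (mul_pos ha h1τ) (mul_pos hc hτ0)
  have hB : 0 < β * ωA * φ / γA * (1 - τ)
      + β * ωY * φ / ((1 - Pi_) * γY + Pi_ * η) * τ :=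
    add_pos (mul_pos hb h1τ) (mul_pos he hτ0)
  -- Step 1: compute the matrix product explicitly
  have hM : (!![0, β * ωP * ωA * φ, β * ωP * ωY * φ, β * ωA * φ, β * ωY * φ;
          (1 - τ) * σ, 0, 0, 0, 0;
          τ * σ, 0, 0, 0, 0;
          0, ρA, 0, 0, 0;
          0, 0, ρY, 0, 0] *
        (Matrix.diagonal ![σ, ρA, ρY, γA, (1 - Pi_) * γY + Pi_ * η])⁻¹)
      = !![0, β * ωP * ωA * φ / ρA, β * ωP * ωY * φ / ρY, β * ωA * φ / γA,
            β * ωY * φ / ((1 - Pi_) * γY + Pi_ * η);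
           1 - τ, 0, 0, 0, 0;
           τ, 0, 0, 0, 0;
           0, 1, 0, 0, 0;
           0, 0, 1, 0, 0] := by
    have hinv : (Matrix.diagonal ![σ, ρA, ρY, γA, (1 - Pi_) * γY + Pi_ * η])⁻¹
        = Matrix.diagonal ![σ⁻¹, ρA⁻¹, ρY⁻¹, γA⁻¹, ((1 - Pi_) * γY + Pi_ * η)⁻¹] := by
      apply Matrix.inv_eq_right_inv
      rw [Matrix.diagonal_mul_diagonal,
        show (fun i => ![σ, ρA, ρY, γA, (1 - Pi_) * γY + Pi_ * η] i *
              ![σ⁻¹, ρA⁻¹, ρY⁻¹, γA⁻¹, ((1 - Pi_) * γY + Pi_ * η)⁻¹] i)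
            = (1 : Fin 5 → ℝ) from funext fun i => by
          fin_cases i <;>
            simp [Matrix.vecHead, Matrix.vecTail, mul_inv_cancel₀,
              hσ.ne', hρA.ne', hρY.ne', hγA.ne', hd.ne']]
      exact Matrix.diagonal_one
    rw [hinv]
    ext i j
    rw [Matrix.mul_diagonal]
    fin_cases i <;> fin_cases j <;>
      simp [Matrix.vecHead, Matrix.vecTail, div_eq_mul_inv] <;>
      field_simp
  rw [hM]
  -- Step 2: the complexified matrix
  have hMc : (!![0, β * ωP * ωA * φ / ρA, β * ωP * ωY * φ / ρY, β * ωA * φ / γA,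
            β * ωY * φ / ((1 - Pi_) * γY + Pi_ * η);
           1 - τ, 0, 0, 0, 0;
           τ, 0, 0, 0, 0;
           0, 1, 0, 0, 0;
           0, 0, 1, 0, 0] : Matrix (Fin 5) (Fin 5) ℝ).map (Complex.ofReal : ℝ → ℂ)
      = !![0, ((β * ωP * ωA * φ / ρA : ℝ) : ℂ), ((β * ωP * ωY * φ / ρY : ℝ) : ℂ),
            ((β * ωA * φ / γA : ℝ) : ℂ),
            ((β * ωY * φ / ((1 - Pi_) * γY + Pi_ * η) : ℝ) : ℂ);
           1 - ((τ : ℝ) : ℂ), 0, 0, 0, 0;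
           ((τ : ℝ) : ℂ), 0, 0, 0, 0;
           0, 1, 0, 0, 0;
           0, 0, 1, 0, 0] := by
    ext i j
    fin_cases i <;> fin_cases j <;>
      simp [Matrix.map_apply, Matrix.vecHead, Matrix.vecTail] <;> push_cast <;> ring
  -- Step 3: root characterization
  have hroot : ∀ μ : ℂ,
      ((!![0, β * ωP * ωA * φ / ρA, β * ωP * ωY * φ / ρY, β * ωA * φ / γA,
            β * ωY * φ / ((1 - Pi_) * γY + Pi_ * η);
           1 - τ, 0, 0, 0, 0;
           τ, 0, 0, 0, 0;
           0, 1, 0, 0, 0;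
           0, 0, 1, 0, 0] : Matrix (Fin 5) (Fin 5) ℝ).map
          (Complex.ofReal : ℝ → ℂ)).charpoly.IsRoot μ
        ↔ μ ^ 2 * (μ ^ 3
            - ((β * ωP * ωA * φ / ρA * (1 - τ) + β * ωP * ωY * φ / ρY * τ : ℝ) : ℂ) * μ
            - ((β * ωA * φ / γA * (1 - τ)
                + β * ωY * φ / ((1 - Pi_) * γY + Pi_ * η) * τ : ℝ) : ℂ)) = 0 := by
    intro μ
    rw [Polynomial.IsRoot, hMc, charpoly_eval',
      det5' ((β * ωP * ωA * φ / ρA : ℝ) : ℂ) ((β * ωA * φ / γA : ℝ) : ℂ)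
        ((β * ωP * ωY * φ / ρY : ℝ) : ℂ)
        ((β * ωY * φ / ((1 - Pi_) * γY + Pi_ * η) : ℝ) : ℂ) ((τ : ℝ) : ℂ) μ]
    have hcast : μ ^ 2 * (μ ^ 3
        - (((β * ωP * ωA * φ / ρA : ℝ) : ℂ) * (1 - ((τ : ℝ) : ℂ))
            + ((β * ωP * ωY * φ / ρY : ℝ) : ℂ) * ((τ : ℝ) : ℂ)) * μ
        - (((β * ωA * φ / γA : ℝ) : ℂ) * (1 - ((τ : ℝ) : ℂ))
            + ((β * ωY * φ / ((1 - Pi_) * γY + Pi_ * η) : ℝ) : ℂ) * ((τ : ℝ) : ℂ)))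
        = μ ^ 2 * (μ ^ 3
            - ((β * ωP * ωA * φ / ρA * (1 - τ) + β * ωP * ωY * φ / ρY * τ : ℝ) : ℂ) * μ
            - ((β * ωA * φ / γA * (1 - τ)
                + β * ωY * φ / ((1 - Pi_) * γY + Pi_ * η) * τ : ℝ) : ℂ)) := by
      push_cast; ring
    rw [hcast]
  -- Step 4: conclude
  unfold specRad
  have hset : {x : ℝ | ∃ μ : ℂ,
      ((!![0, β * ωP * ωA * φ / ρA, β * ωP * ωY * φ / ρY, β * ωA * φ / γA,
            β * ωY * φ / ((1 - Pi_) * γY + Pi_ * η);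
           1 - τ, 0, 0, 0, 0;
           τ, 0, 0, 0, 0;
           0, 1, 0, 0, 0;
           0, 0, 1, 0, 0] : Matrix (Fin 5) (Fin 5) ℝ).map
          (Complex.ofReal : ℝ → ℂ)).charpoly.IsRoot μ ∧ x = ‖μ‖}
      = {x : ℝ | ∃ μ : ℂ, μ ^ 2 * (μ ^ 3
            - ((β * ωP * ωA * φ / ρA * (1 - τ) + β * ωP * ωY * φ / ρY * τ : ℝ) : ℂ) * μ
            - ((β * ωA * φ / γA * (1 - τ)
                + β * ωY * φ / ((1 - Pi_) * γY + Pi_ * η) * τ : ℝ) : ℂ)) = 0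
          ∧ x = ‖μ‖} := by
    ext x
    simp only [Set.mem_setOf_eq, hroot]
  rw [hset, key' _ _ hA hB,
    show β * φ * ((1 - τ) * (ωP * ωA / ρA + ωA / γA)
        + τ * (ωP * ωY / ρY + ωY / ((1 - Pi_) * γY + Pi_ * η)))
      = (β * ωP * ωA * φ / ρA * (1 - τ) + β * ωP * ωY * φ / ρY * τ)
        + (β * ωA * φ / γA * (1 - τ)
            + β * ωY * φ / ((1 - Pi_) * γY + Pi_ * η) * τ) from by ring]
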